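/- If B is 1-generic over A and A is 1-generic, then A ⊕ B is 1-generic. -/

import Mathlib

/-- `RecursiveInO O f` means the partial function `f : ℕ →. ℕ` is partial recursive
relative to the oracle `O : ℕ →. ℕ`. -/
inductive RecursiveInO (O : ℕ →. ℕ) : (ℕ →. ℕ) → Prop
  | oracle : RecursiveInO O O
  | zero : RecursiveInO O (pure 0)
  | succ : RecursiveInO O Nat.succ
  | left : RecursiveInO O fun n => (Nat.unpair n).1
  | right : RecursiveInO O fun n => (Nat.unpair n).2
  | pair {f g : ℕ →. ℕ} : RecursiveInO O f → RecursiveInO O g →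
      RecursiveInO O fun n => Nat.pair <$> f n <*> g n
  | comp {f g : ℕ →. ℕ} : RecursiveInO O f → RecursiveInO O g →
      RecursiveInO O fun n => g n >>= f
  | prec {f g : ℕ →. ℕ} : RecursiveInO O f → RecursiveInO O g →
      RecursiveInO O (Nat.unpaired fun a n =>
        n.rec (f a) fun y IH => do let i ← IH; g (Nat.pair a (Nat.pair y i)))
  | rfind {f : ℕ →. ℕ} : RecursiveInO O f →
      RecursiveInO O fun a => Nat.rfind fun n => (fun m => m = 0) <$> f (Nat.pair a n)

/-- Turing reducibility on total functions in Baire space. -/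
def TuringLE (f g : ℕ → ℕ) : Prop := RecursiveInO (↑g) (↑f)

/-- Turing equivalence. -/
def TuringEquiv (f g : ℕ → ℕ) : Prop := TuringLE f g ∧ TuringLE g f

/-- The join `f ⊕ g` of two elements of Baire space. -/
def fjoin (f g : ℕ → ℕ) : ℕ → ℕ := fun n => if n % 2 = 0 then f (n / 2) else g (n / 2)

/-- Codes for oracle Turing machines (partial recursive functionals with one oracle). -/
inductive Codeo : Type
  | oracle : Codeo
  | zero : Codeo
  | succ : Codeo
  | left : Codeo
  | right : Codeo
  | pair : Codeo → Codeo → Codeo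
  | comp : Codeo → Codeo → Codeo
  | prec : Codeo → Codeo → Codeo
  | rfind : Codeo → Codeo

/-- Evaluation of a code relative to a (possibly partial) oracle. -/
def evalo (O : ℕ →. ℕ) : Codeo → ℕ →. ℕ
  | Codeo.oracle => O
  | Codeo.zero => pure 0
  | Codeo.succ => Nat.succ
  | Codeo.left => fun n => (Nat.unpair n).1
  | Codeo.right => fun n => (Nat.unpair n).2
  | Codeo.pair a b => fun n => Nat.pair <$> evalo O a n <*> evalo O b n
  | Codeo.comp a b => fun n => evalo O b n >>= evalo O a
  | Codeo.prec a b => Nat.unpaired fun x y =>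
      y.rec (evalo O a x) fun y IH => do let i ← IH; evalo O b (Nat.pair x (Nat.pair y i))
  | Codeo.rfind a => fun n =>
      Nat.rfind fun m => (fun k => k = 0) <$> evalo O a (Nat.pair n m)

/-- A Gödel numbering of the oracle codes. -/
def encodeCodeo : Codeo → ℕ
  | Codeo.oracle => 0
  | Codeo.zero => 1
  | Codeo.succ => 2
  | Codeo.left => 3
  | Codeo.right => 4
  | Codeo.pair a b => 4 * Nat.pair (encodeCodeo a) (encodeCodeo b) + 5
  | Codeo.comp a b => 4 * Nat.pair (encodeCodeo a) (encodeCodeo b) + 6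
  | Codeo.prec a b => 4 * Nat.pair (encodeCodeo a) (encodeCodeo b) + 7
  | Codeo.rfind a => 4 * encodeCodeo a + 8

/-- The Turing jump of an oracle: the diagonal halting set `{e : {e}^O(e)↓}`. -/
def jump (O : ℕ →. ℕ) : Set ℕ :=
  {n | ∃ c : Codeo, encodeCodeo c = n ∧ (evalo O c n).Dom}

open Classical in
/-- The characteristic function of a set of naturals. -/
noncomputable def chi (A : Set ℕ) : ℕ → ℕ := fun n => if n ∈ A then 1 else 0

/-- The halting problem `∅′`. -/
noncomputable def K : Set ℕ := jump ↑(chi (∅ : Set ℕ))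

/-- A set `A` (or a function) is low if its jump is Turing reducible to `∅′`. -/
noncomputable def LowSet (A : Set ℕ) : Prop := TuringLE (chi (jump ↑(chi A))) (chi K)

/-- A function `f` is low if its jump is Turing reducible to `∅′`. -/
noncomputable def LowFun (f : ℕ → ℕ) : Prop := TuringLE (chi (jump ↑f)) (chi K)

/-- The join `A ⊕ B` of two sets of naturals. -/
def sjoin (A B : Set ℕ) : Set ℕ :=
  {n | (n % 2 = 0 ∧ n / 2 ∈ A) ∨ (n % 2 = 1 ∧ n / 2 ∈ B)}

/-- A finite binary string viewed as a partial oracle, undefined beyond its length. -/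
def listOracle (σ : List Bool) : ℕ →. ℕ :=
  fun n => if h : n < σ.length then Part.some (if σ.get ⟨n, h⟩ then 1 else 0) else Part.none

/-- The join of a total oracle (on even positions) with a partial oracle (odd positions). -/
def join2P (f : ℕ → ℕ) (g : ℕ →. ℕ) : ℕ →. ℕ :=
  fun n => if n % 2 = 0 then Part.some (f (n / 2)) else g (n / 2)

/-- `σ` is a finite initial segment of (the characteristic function of) `C`. -/
def IsInitSeg (σ : List Bool) (C : Set ℕ) : Prop :=
  ∀ i : ℕ, ∀ h : i < σ.length, (σ.get ⟨i, h⟩ = true ↔ i ∈ C)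

/-- `C` is 1-generic over `A`: for every (code of an) oracle machine `e` there is a finite
initial segment `σ` of `C` such that either `{e}^{A ⊕ σ}(e)↓`, or `{e}^{A ⊕ τ}(e)↑` for
every finite binary string `τ ⊇ σ`. -/
noncomputable def OneGenericOver (A C : Set ℕ) : Prop :=
  ∀ c : Codeo, ∃ σ : List Bool, IsInitSeg σ C ∧
    ((evalo (join2P (chi A) (listOracle σ)) c (encodeCodeo c)).Dom ∨
      ∀ τ : List Bool, σ <+: τ →
        ¬ (evalo (join2P (chi A) (listOracle τ)) c (encodeCodeo c)).Dom)

/-- `C` is 1-generic (over the empty, i.e. a computable, oracle). -/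
noncomputable def OneGeneric (C : Set ℕ) : Prop := OneGenericOver ∅ C

/-!
Fix a machine `e`. Over `A ⊕ τ` one can search for a string `σ` read off the oracle on which
`e` halts; 1-genericity of `B` over `A` gives `τ ≺ B` that either finds such a `σ`, which is
then an initial segment of `A ⊕ B` forcing convergence, or forces the search to diverge. In the
second case no halting `σ` agrees with `A` on its even and with `τ` on its odd positions. Now
search, over `α`, for a halting `σ` whose even bits are read off `α` and whose odd bits agree
with `τ`: along `α ≺ A` it cannot succeed, so genericity of `A` yields `α ≺ A` forcing it to
diverge. Then the initial segment of `A ⊕ B` of length `2 (|α| + |τ|)` forces `e` to diverge: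
a halting extension would be found along a long enough extension of `α` by its even bits.
-/

open Encodable

open Nat.Partrec in
theorem Partrec.exists_primrecRel_dom_iff {α σ : Type*} [Primcodable α] [Primcodable σ]
    {f : α →. σ} (hf : Partrec f) :
    ∃ R : α → ℕ → Prop, PrimrecRel R ∧ ∀ a, (f a).Dom ↔ ∃ t, R a t := by
  obtain ⟨c, hc⟩ := Code.exists_code.1 hf
  refine ⟨fun a t => (Code.evaln t c (encode a)).isSome, ?_, fun a => ?_⟩
  · have : Primrec fun p : α × ℕ => (Code.evaln p.2 c (encode p.1)).isSome :=
      Primrec.option_isSome.comp (Code.primrec_evaln.comp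
        ((Primrec.snd.pair (Primrec.const c)).pair (Primrec.encode.comp Primrec.fst)))
    exact Primrec.primrecPred (by simpa using this)
  · have hdom : (f a).Dom ↔ (Code.eval c (encode a)).Dom := by simp [hc, encodek]
    rw [hdom, Part.dom_iff_mem]
    simp only [Code.evaln_complete, Option.isSome_iff_exists, Option.mem_def]
    exact exists_comm

theorem PrimrecRel.forall_lt_of_primrec {α : Type*} [Primcodable α] {P : α → ℕ → Prop}
    (hP : PrimrecRel P) {n : α → ℕ} (hn : Primrec n) : PrimrecPred fun a => ∀ i < n a, P a i :=
  (hP.swap.forall_mem_list.comp (Primrec.list_range.comp hn) Primrec.id).of_eq fun a => by simp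

open Computable in
theorem partrec₂_evalo {α : Type*} [Primcodable α] {O : α → ℕ →. ℕ} (hO : Partrec₂ O)
    (c : Codeo) : Partrec₂ fun a => evalo (O a) c := by
  have hpair : Computable₂ Nat.pair := Primrec₂.natPair.to_comp
  have hleft : Computable fun p : α × ℕ => p.2.unpair.1 := fst.comp (unpair.comp snd)
  have hright : Computable fun p : α × ℕ => p.2.unpair.2 := snd.comp (unpair.comp snd)
  induction c with
  | oracle => exact hO
  | zero => exact (const 0).partrec
  | succ => exact (succ.comp snd).partrec
  | left => exact hleft.partrec
  | right => exact hright.partrec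
  | pair c₁ c₂ ih₁ ih₂ =>
    have h : Partrec₂ fun (p : α × ℕ) (u : ℕ) => (evalo (O p.1) c₂ p.2).map (Nat.pair u) :=
      (ih₂.comp (fst.comp fst) (snd.comp fst)).map (hpair.comp (snd.comp fst) snd).to₂
    exact (ih₁.bind h).of_eq fun p => by simp [evalo, Seq.seq]
  | comp c₁ c₂ ih₁ ih₂ => exact ih₂.bind (ih₁.comp (fst.comp fst) snd)
  | prec c₁ c₂ ih₁ ih₂ =>
    refine (Partrec.nat_rec hright (ih₁.comp fst hleft) (ih₂.comp (fst.comp fst)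
      (hpair.comp (hleft.comp fst) (hpair.comp (fst.comp snd) (snd.comp snd)))).to₂).of_eq
      fun p => ?_
    simp [evalo, Nat.unpaired]
  | rfind c₁ ih₁ =>
    refine (Partrec.rfind ((ih₁.comp (fst.comp fst) (hpair.comp (snd.comp fst) snd)).map
      (Primrec.eq.decide.to_comp.comp snd (const 0)).to₂).to₂).of_eq fun p => ?_
    simp [evalo]

theorem listOracle_eq (σ : List Bool) (n : ℕ) : listOracle σ n = ↑(σ[n]?.map Bool.toNat) := by
  unfold listOracle
  by_cases h : n < σ.length
  · rw [dif_pos h, List.getElem?_eq_getElem h, List.get_eq_getElem]; cases σ[n] <;> rfl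
  · rw [dif_neg h, List.getElem?_eq_none (by omega)]; rfl

theorem partrec₂_join2P_listOracle {f : ℕ → ℕ} (hf : Computable f) :
    Partrec₂ fun σ : List Bool => join2P f (listOracle σ) := by
  have half : Computable fun p : List Bool × ℕ => p.2 / 2 :=
    Primrec.nat_div.to_comp.comp Computable.snd (Computable.const 2)
  have : Computable fun p : List Bool × ℕ =>
      cond (decide (p.2 % 2 = 0)) (some (f (p.2 / 2))) (p.1[p.2 / 2]?.map Bool.toNat) :=
    Computable.cond (Primrec.eq.decide.comp (Primrec.nat_mod.comp Primrec.snd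
        (Primrec.const 2)) (Primrec.const 0)).to_comp
      (Computable.option_some.comp (hf.comp half))
      (Computable.option_map (Computable.list_getElem?.comp Computable.fst half)
        ((Primrec.dom_bool Bool.toNat).to_comp.comp Computable.snd).to₂)
  refine this.ofOption.of_eq fun p => ?_
  simp only [join2P, listOracle_eq]
  split_ifs with h <;> simp [h]

theorem exists_primrecRel_halts {f : ℕ → ℕ} (hf : Computable f) (c : Codeo) (e : ℕ) :
    ∃ R : List Bool → ℕ → Prop, PrimrecRel R ∧
      ∀ σ, (evalo (join2P f (listOracle σ)) c e).Dom ↔ ∃ t, R σ t :=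
  ((partrec₂_evalo (partrec₂_join2P_listOracle hf) c).comp Computable.id
    (Computable.const e)).exists_primrecRel_dom_iff

def OracleComputable (F : (ℕ →. ℕ) → ℕ →. ℕ) : Prop := ∃ c : Codeo, (fun O => evalo O c) = F

namespace OracleComputable

variable {F G : (ℕ →. ℕ) → ℕ →. ℕ}

theorem of_eq (hF : OracleComputable F) (h : ∀ O n, F O n = G O n) : OracleComputable G :=
  hF.imp fun _ hc => hc.trans (funext₂ h)

theorem oracle : OracleComputable fun O => O := ⟨Codeo.oracle, rfl⟩

theorem pair (hF : OracleComputable F) (hG : OracleComputable G) :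
    OracleComputable fun O n => Nat.pair <$> F O n <*> G O n := by
  obtain ⟨c₁, rfl⟩ := hF; obtain ⟨c₂, rfl⟩ := hG
  exact ⟨Codeo.pair c₁ c₂, rfl⟩

theorem comp (hF : OracleComputable F) (hG : OracleComputable G) :
    OracleComputable fun O n => G O n >>= F O := by
  obtain ⟨c₁, rfl⟩ := hF; obtain ⟨c₂, rfl⟩ := hG
  exact ⟨Codeo.comp c₁ c₂, rfl⟩

theorem prec (hF : OracleComputable F) (hG : OracleComputable G) :
    OracleComputable fun O => Nat.unpaired fun a m =>
      m.rec (F O a) fun y IH => IH >>= fun i => G O (Nat.pair a (Nat.pair y i)) := by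
  obtain ⟨c₁, rfl⟩ := hF; obtain ⟨c₂, rfl⟩ := hG
  exact ⟨Codeo.prec c₁ c₂, rfl⟩

theorem rfind (hF : OracleComputable F) :
    OracleComputable fun O a => Nat.rfind fun n => (fun m => m = 0) <$> F O (Nat.pair a n) := by
  obtain ⟨c, rfl⟩ := hF
  exact ⟨Codeo.rfind c, rfl⟩

theorem of_partrec {f : ℕ →. ℕ} (hf : Nat.Partrec f) : OracleComputable fun _ => f := by
  induction hf with
  | zero => exact ⟨Codeo.zero, rfl⟩
  | succ => exact ⟨Codeo.succ, rfl⟩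
  | left => exact ⟨Codeo.left, rfl⟩
  | right => exact ⟨Codeo.right, rfl⟩
  | pair _ _ ih₁ ih₂ => exact ih₁.pair ih₂
  | comp _ _ ih₁ ih₂ => exact ih₁.comp ih₂
  | prec _ _ ih₁ ih₂ => exact ih₁.prec ih₂
  | rfind _ ih => exact ih.rfind

theorem of_computable {f : ℕ → ℕ} (hf : Computable f) :
    OracleComputable fun _ n => Part.some (f n) :=
  of_partrec (Partrec.nat_iff.1 hf.partrec)

theorem map (hF : OracleComputable F) {g : ℕ → ℕ → ℕ} (hg : Computable₂ g) :
    OracleComputable fun O n => (F O n).map (g n) :=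
  ((of_computable (hg.comp (Computable.fst.comp Computable.unpair)
    (Computable.snd.comp Computable.unpair))).comp ((of_computable Computable.id).pair hF)).of_eq
    fun O n => by simp [Seq.seq, Part.bind_some_eq_map, Part.map_map, Function.comp_def]

theorem precomp (hF : OracleComputable F) {g : ℕ → ℕ} (hg : Computable g) :
    OracleComputable fun O n => F O (g n) :=
  (hF.comp (of_computable hg)).of_eq fun O n => Part.bind_some (g n) (F O)

end OracleComputable

def oracleTake (O : ℕ →. ℕ) : ℕ → Part (List ℕ)
  | 0 => Part.some []
  | k + 1 => (oracleTake O k).bind fun l => (O k).map (l ++ [·])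

def IsOraclePrefix (l : List ℕ) (O : ℕ →. ℕ) : Prop := ∀ j (h : j < l.length), l[j] ∈ O j

theorem IsOraclePrefix.take {l : List ℕ} {O : ℕ →. ℕ} (h : IsOraclePrefix l O) (k : ℕ) :
    IsOraclePrefix (l.take k) O := fun j hj => by
  simpa using h j (by simp at hj; omega)

theorem mem_oracleTake {O : ℕ →. ℕ} {k : ℕ} {l : List ℕ} :
    l ∈ oracleTake O k ↔ l.length = k ∧ IsOraclePrefix l O := by
  induction k generalizing l with
  | zero => simp +contextual [oracleTake, IsOraclePrefix]
  | succ k ih =>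
    simp only [oracleTake, Part.mem_bind_iff, Part.mem_map_iff, ih]
    constructor
    · rintro ⟨l', ⟨hlen, hl'⟩, v, hv, rfl⟩
      refine ⟨by simp [hlen], fun j hj => ?_⟩
      rcases lt_or_eq_of_le (Nat.le_of_lt_succ (by simpa [hlen] using hj)) with hj' | rfl
      · simpa [List.getElem_append_left (hlen ▸ hj')] using hl' j (hlen ▸ hj')
      · simpa [hlen] using hv
    · rintro ⟨hlen, hl⟩
      refine ⟨l.take k, ⟨by simp [hlen], hl.take k⟩, l[k], hl k (by omega), ?_⟩
      rw [List.take_append_getElem, ← hlen, List.take_length]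

theorem oracleComputable_oracleTake :
    OracleComputable fun O n => (oracleTake O n).map encode := by
  have hleft : Computable fun m : ℕ => m.unpair.1 := Computable.fst.comp Computable.unpair
  have hright : Computable fun m : ℕ => m.unpair.2 := Computable.snd.comp Computable.unpair
  have hstep : Computable₂ fun (m v : ℕ) =>
      encode (Denumerable.ofNat (List ℕ) m.unpair.2.unpair.2 ++ [v]) :=
    (Computable.encode.comp (Primrec.list_concat.to_comp.comp
      ((Computable.ofNat (List ℕ)).comp (hright.comp (hright.comp Computable.fst)))
      Computable.snd)).to₂
  have hread := ((OracleComputable.of_computable (Computable.const (encode ([] : List ℕ)))).prec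
    ((OracleComputable.oracle.precomp (hleft.comp hright)).map hstep)).precomp
    (Primrec₂.natPair.to_comp.comp (Computable.const 0) Computable.id)
  refine hread.of_eq fun O n => ?_
  simp only [Nat.unpaired, Nat.unpair_pair, id]
  induction n with
  | zero => rfl
  | succ n ih =>
    simp only [ih, oracleTake]
    simp [Part.map_bind, Part.bind_map, Part.map_map, Function.comp_def]

section Search

variable {β : Type*} [Primcodable β]

/-- The bound `encode w ≤ l.length` lets a single search over the lengths of oracle prefixes
detect success. -/
def SearchSucceeds (R : List ℕ → β → Prop) (O : ℕ →. ℕ) : Prop :=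
  ∃ l, IsOraclePrefix l O ∧ ∃ w, encode w ≤ l.length ∧ R l w

theorem primrecPred_exists_encode_le {R : List ℕ → β → Prop} (hR : PrimrecRel R) :
    PrimrecPred fun l => ∃ w, encode w ≤ l.length ∧ R l w := by
  classical
  have hdecode : PrimrecRel fun (k : ℕ) (l : List ℕ) => ∃ w ∈ decode₂ β k, R l w :=
    Primrec.primrecPred ((Primrec.option_casesOn (Primrec.decode₂.comp Primrec.fst)
      (Primrec.const false) (hR.decide.comp (Primrec.snd.comp Primrec.fst) Primrec.snd).to₂).of_eq
      fun p => by rw [Bool.eq_iff_iff, decide_eq_true_eq]; cases h : decode₂ β p.1 <;> simp [h])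
  refine (hdecode.exists_mem_list.comp (Primrec.list_range.comp
    (Primrec.succ.comp Primrec.list_length)) Primrec.id).of_eq fun l => ?_
  simp only [List.mem_range, Nat.lt_succ_iff, id, Encodable.mem_decode₂]
  constructor
  · rintro ⟨_, hk, w, rfl, hR⟩
    exact ⟨w, hk, hR⟩
  · rintro ⟨w, hw, hR⟩
    exact ⟨encode w, hw, w, rfl, hR⟩

theorem exists_code_dom_iff_searchSucceeds {R : List ℕ → β → Prop} (hR : PrimrecRel R) :
    ∃ d : Codeo, ∀ O n, (evalo O d n).Dom ↔ SearchSucceeds R O := by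
  classical
  set Q : List ℕ → Prop := fun l => ∃ w, encode w ≤ l.length ∧ R l w
  have hcheck : Computable₂ fun (_ z : ℕ) => if Q (Denumerable.ofNat (List ℕ) z) then 0 else 1 :=
    (Primrec.ite ((primrecPred_exists_encode_le hR).comp (Primrec.ofNat (List ℕ)))
      (Primrec.const 0) (Primrec.const 1)).to_comp.comp₂ Computable.snd.to₂
  obtain ⟨d, hd⟩ := ((oracleComputable_oracleTake.map hcheck).precomp
    (Computable.snd.comp Computable.unpair)).rfind
  refine ⟨d, fun O n => ?_⟩
  have hstep : ∀ k, (fun m => decide (m = 0)) <$>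
      ((oracleTake O (Nat.pair n k).unpair.2).map encode).map
        (fun z => if Q (Denumerable.ofNat (List ℕ) z) then 0 else 1) =
      (oracleTake O k).map fun l => decide (Q l) := fun k => by
    simp [Part.map_map, Function.comp_def]
  rw [show evalo O d n = _ from congrFun (congrFun hd O) n]
  simp only [hstep]
  refine Nat.rfind_dom.trans ?_
  simp only [Part.mem_map_iff, Part.map_Dom, decide_eq_true_eq]
  constructor
  · rintro ⟨k, ⟨l, hl, hQ⟩, -⟩
    exact ⟨l, (mem_oracleTake.1 hl).2, hQ⟩
  · rintro ⟨l, hl, hQ⟩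
    refine ⟨l.length, ⟨l, mem_oracleTake.2 ⟨rfl, hl⟩, hQ⟩, fun {m} hm => ?_⟩
    exact Part.dom_iff_mem.2 ⟨l.take m, mem_oracleTake.2 ⟨by simp; omega, hl.take m⟩⟩

end Search

def charFn (σ : List Bool) (i : ℕ) : ℕ := (σ.getD i false).toNat

theorem chi_sjoin (A B : Set ℕ) : chi (sjoin A B) = fjoin (chi A) (chi B) := by
  classical
  funext n
  unfold chi fjoin
  rcases Nat.mod_two_eq_zero_or_one n with h | h
  · rw [if_pos h]; exact if_congr (by simp [sjoin, h]) rfl rfl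
  · rw [if_neg (show ¬n % 2 = 0 by omega)]; exact if_congr (by simp [sjoin, h]) rfl rfl

theorem toNat_eq_chi_iff {b : Bool} {C : Set ℕ} {i : ℕ} :
    b.toNat = chi C i ↔ (b = true ↔ i ∈ C) := by
  by_cases hi : i ∈ C <;> cases b <;> simp [chi, hi]

theorem IsInitSeg.charFn_eq {σ : List Bool} {C : Set ℕ} (h : IsInitSeg σ C) {i : ℕ}
    (hi : i < σ.length) : charFn σ i = chi C i := by
  rw [charFn, List.getD_eq_getElem _ _ hi, toNat_eq_chi_iff]
  simpa using h i hi

theorem isInitSeg_iff_charFn {σ : List Bool} {C : Set ℕ} :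
    IsInitSeg σ C ↔ ∀ i < σ.length, charFn σ i = chi C i := by
  refine ⟨fun h i hi => h.charFn_eq hi, fun h i hi => ?_⟩
  have := h i hi
  rwa [charFn, List.getD_eq_getElem _ _ hi, toNat_eq_chi_iff] at this

theorem exists_isInitSeg (C : Set ℕ) (n : ℕ) : ∃ γ, IsInitSeg γ C ∧ γ.length = n := by
  classical
  exact ⟨(List.range n).map fun i => decide (i ∈ C), fun i hi => by simp, by simp⟩

theorem charFn_of_prefix {γ τ : List Bool} (h : γ <+: τ) {i : ℕ} (hi : i < γ.length) :
    charFn τ i = charFn γ i := by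
  obtain ⟨ρ, rfl⟩ := h
  rw [charFn, charFn, List.getD_append _ _ _ _ hi]

theorem mem_join2P_listOracle {f : ℕ → ℕ} {ρ : List Bool} {j v : ℕ} :
    v ∈ join2P f (listOracle ρ) j ↔
      (j % 2 = 1 → j / 2 < ρ.length) ∧ v = fjoin f (charFn ρ) j := by
  rcases Nat.mod_two_eq_zero_or_one j with h | h
  · simp [join2P, fjoin, h]
  · by_cases hlt : j / 2 < ρ.length
    · simp [join2P, fjoin, h, hlt, listOracle_eq, charFn, eq_comm]
    · simp [join2P, fjoin, h, hlt, listOracle_eq]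

theorem isOraclePrefix_range_map {f : ℕ → ℕ} {ρ : List Bool} {k : ℕ} (hk : k ≤ 2 * ρ.length) :
    IsOraclePrefix ((List.range k).map (fjoin f (charFn ρ))) (join2P f (listOracle ρ)) :=
  fun j hj => mem_join2P_listOracle.2 ⟨fun _ => by simp at hj; omega, by simp⟩

def extendWith (τ : List Bool) (g : ℕ → Bool) (s : ℕ) : List Bool :=
  τ ++ (List.range (s - τ.length)).map fun j => g (τ.length + j)

theorem length_extendWith {τ : List Bool} {g : ℕ → Bool} {s : ℕ} (h : τ.length ≤ s) :
    (extendWith τ g s).length = s := by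
  simp [extendWith]; omega

theorem charFn_extendWith {τ : List Bool} {g : ℕ → Bool} {s j : ℕ} (hj : j < s) :
    charFn (extendWith τ g s) j = if j < τ.length then charFn τ j else (g j).toNat := by
  unfold charFn extendWith
  split_ifs with h
  · rw [List.getD_append _ _ _ _ h]
  · rw [List.getD_append_right _ _ _ _ (by omega), List.getD_eq_getElem _ _ (by simp; omega)]
    simp [show τ.length + (j - τ.length) = j by omega]

/-- `σ` agrees with `f ⊕ τ` wherever the latter is defined. -/
def CompatibleJoin (σ : List Bool) (f : ℕ → ℕ) (τ : List Bool) : Prop :=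
  ∀ i < σ.length, (i % 2 = 1 ∧ τ.length ≤ i / 2) ∨ charFn σ i = fjoin f (charFn τ) i

def CertifiedPrefix (R : List Bool → ℕ → Prop) (l : List ℕ) (w : List Bool × ℕ) : Prop :=
  R w.1 w.2 ∧ w.1.map Bool.toNat <+: l

/-- Over the oracle `f ⊕ α` the string `α` occupies the odd positions `2 j + 1` of `l`. -/
def CertifiedOddCompatible (R : List Bool → ℕ → Prop) (τ : List Bool) (l : List ℕ)
    (w : List Bool × ℕ) : Prop :=
  R w.1 w.2 ∧ w.1.length < l.length ∧ CompatibleJoin w.1 (fun j => l.getD (2 * j + 1) 0) τ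

theorem primrec_charFn : Primrec₂ charFn :=
  (Primrec.dom_bool Bool.toNat).comp₂ (Primrec.list_getD false)

open Primrec in
theorem primrecPred_compatibleJoin {α : Type*} [Primcodable α] {σ τ : α → List Bool}
    {f : α → ℕ → ℕ} (hσ : Primrec σ) (hf : Primrec₂ f) (hτ : Primrec τ) :
    PrimrecPred fun a => CompatibleJoin (σ a) (f a) (τ a) := by
  have half : Primrec fun q : α × ℕ => q.2 / 2 := nat_div.comp snd (const 2)
  have hjoin : Primrec fun q : α × ℕ => fjoin (f q.1) (charFn (τ q.1)) q.2 :=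
    ite (Primrec.eq.comp (nat_mod.comp snd (const 2)) (const 0)) (hf.comp fst half)
      (primrec_charFn.comp (hτ.comp fst) half)
  refine PrimrecRel.forall_lt_of_primrec (P := fun a i => (i % 2 = 1 ∧ (τ a).length ≤ i / 2) ∨
    charFn (σ a) i = fjoin (f a) (charFn (τ a)) i)
    (((Primrec.eq.comp (nat_mod.comp snd (const 2)) (const 1)).and
      (nat_le.comp (list_length.comp (hτ.comp fst)) half)).or
    (Primrec.eq.comp (primrec_charFn.comp (hσ.comp fst) snd) hjoin)) (list_length.comp hσ)

open Primrec in
theorem primrecRel_certifiedPrefix {R : List Bool → ℕ → Prop} (hR : PrimrecRel R) :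
    PrimrecRel (CertifiedPrefix R) := by
  refine (hR.comp (fst.comp snd) (snd.comp snd)).and ((Primrec.eq.comp
    (list_map (fst.comp snd) ((dom_bool Bool.toNat).comp snd).to₂)
    (list_take.comp (list_length.comp (fst.comp snd)) fst)).of_eq fun q => ?_)
  rw [List.prefix_iff_eq_take, List.length_map]

open Primrec in
theorem primrecRel_certifiedOddCompatible {R : List Bool → ℕ → Prop} (hR : PrimrecRel R)
    (τ : List Bool) : PrimrecRel (CertifiedOddCompatible R τ) :=
  (hR.comp (fst.comp snd) (snd.comp snd)).and ((nat_lt.comp (list_length.comp (fst.comp snd))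
    (list_length.comp fst)).and (primrecPred_compatibleJoin (fst.comp snd)
      ((list_getD 0).comp (fst.comp fst) (succ.comp (nat_mul.comp (const 2) snd))) (const τ)))

section Forcing

variable {A B : Set ℕ} {R : List Bool → ℕ → Prop}

theorem exists_isInitSeg_sjoin_of_searchSucceeds {τ : List Bool} (hτ : IsInitSeg τ B)
    (h : SearchSucceeds (CertifiedPrefix R) (join2P (chi A) (listOracle τ))) :
    ∃ σ, IsInitSeg σ (sjoin A B) ∧ ∃ t, R σ t := by
  obtain ⟨l, hl, ⟨σ, t⟩, -, hR, hσl⟩ := h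
  refine ⟨σ, isInitSeg_iff_charFn.2 fun i hi => ?_, t, hR⟩
  obtain ⟨hlen, hσl⟩ := List.prefix_iff_getElem.1 hσl
  have hli := mem_join2P_listOracle.1 (hl i (by simp at hlen; omega))
  have hσi := hσl i (by simpa using hi)
  simp only [List.getElem_map] at hσi
  rw [charFn, List.getD_eq_getElem _ _ hi, hσi, hli.2, chi_sjoin]
  unfold fjoin
  split_ifs with hi2
  · rfl
  · exact hτ.charFn_eq (hli.1 (by omega))

theorem not_compatibleJoin_of_forall_not_searchSucceeds {f : ℕ → ℕ} {τ σ : List Bool} {t : ℕ}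
    (hdiv : ∀ ρ, τ <+: ρ → ¬SearchSucceeds (CertifiedPrefix R) (join2P f (listOracle ρ)))
    (hR : R σ t) : ¬CompatibleJoin σ f τ := by
  intro hc
  -- long enough to hold the odd bits of `σ` and to admit `(σ, t)` within the search bound
  set s := σ.length + τ.length + encode (σ, t)
  set ρ := extendWith τ (fun j => σ.getD (2 * j + 1) false) s
  have hρ : ρ.length = s := length_extendWith (by omega)
  refine hdiv ρ (List.prefix_append _ _) ⟨_, isOraclePrefix_range_map (le_refl _), (σ, t),
    by rw [List.length_map, List.length_range, hρ]; omega, hR,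
    List.prefix_iff_getElem.2 ⟨by simp [hρ]; omega, fun i hi => ?_⟩⟩
  simp only [List.length_map] at hi
  simp only [List.getElem_map, List.getElem_range]
  rw [← List.getD_eq_getElem σ false hi]
  change charFn σ i = _
  have hρi := charFn_extendWith (τ := τ) (g := fun j => σ.getD (2 * j + 1) false) (s := s)
    (j := i / 2) (by omega)
  unfold fjoin
  by_cases hout : i % 2 = 1 ∧ τ.length ≤ i / 2
  · rw [if_neg (by omega), hρi, if_neg (by omega), charFn, show 2 * (i / 2) + 1 = i by omega]
  · rw [(hc i hi).resolve_left hout]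
    unfold fjoin
    split_ifs with h1
    · rfl
    · rw [hρi, if_pos (by omega)]

theorem exists_compatibleJoin_of_searchSucceeds {f : ℕ → ℕ} {τ α : List Bool}
    (hα : IsInitSeg α A)
    (h : SearchSucceeds (CertifiedOddCompatible R τ) (join2P f (listOracle α))) :
    ∃ σ t, R σ t ∧ CompatibleJoin σ (chi A) τ := by
  obtain ⟨l, hl, ⟨σ, t⟩, -, hR, hσl, hc⟩ := h
  refine ⟨σ, t, hR, fun i hi => (hc i hi).imp_right fun hi' => hi'.trans ?_⟩
  unfold fjoin
  split_ifs with hi2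
  · dsimp only at hσl hi ⊢
    have hli := mem_join2P_listOracle.1 (hl (2 * (i / 2) + 1) (by omega))
    rw [List.getD_eq_getElem _ _ (by omega), hli.2, fjoin, if_neg (by omega),
      show (2 * (i / 2) + 1) / 2 = i / 2 by omega]
    exact hα.charFn_eq (by have := hli.1 (by omega); omega)
  · rfl

theorem not_certified_of_forall_not_searchSucceeds {f : ℕ → ℕ} {α τ γ σ : List Bool} {t : ℕ}
    (hα : IsInitSeg α A) (hτ : IsInitSeg τ B) (hγ : IsInitSeg γ (sjoin A B))
    (hαγ : 2 * α.length ≤ γ.length) (hτγ : 2 * τ.length ≤ γ.length)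
    (hdiv : ∀ ρ, α <+: ρ →
      ¬SearchSucceeds (CertifiedOddCompatible R τ) (join2P f (listOracle ρ)))
    (hγσ : γ <+: σ) : ¬R σ t := by
  intro hR
  -- long enough to hold the even bits of `σ` and to admit `(σ, t)` within the search bound
  set s := σ.length + α.length + encode (σ, t) + 1
  set ρ := extendWith α (fun j => σ.getD (2 * j) false) s
  have hρ : ρ.length = s := length_extendWith (by omega)
  refine hdiv ρ (List.prefix_append _ _) ⟨_, isOraclePrefix_range_map (le_refl _), (σ, t),
    by rw [List.length_map, List.length_range, hρ]; omega, hR,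
    by dsimp only; rw [List.length_map, List.length_range, hρ]; omega, fun i hi => ?_⟩
  dsimp only at hi ⊢
  by_cases hout : i % 2 = 1 ∧ τ.length ≤ i / 2
  · exact Or.inl hout
  refine Or.inr ?_
  have hσi : i < γ.length → charFn σ i = fjoin (chi A) (chi B) i := fun h => by
    rw [charFn_of_prefix hγσ h, hγ.charFn_eq h, chi_sjoin]
  unfold fjoin
  split_ifs with hi2
  · dsimp only
    rw [List.getD_eq_getElem _ _ (by simp [hρ]; omega), List.getElem_map, List.getElem_range]
    rw [if_neg (by omega), show (2 * (i / 2) + 1) / 2 = i / 2 by omega,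
      charFn_extendWith (τ := α) (g := fun j => σ.getD (2 * j) false) (s := s) (by omega)]
    split_ifs with hiα
    · rw [hσi (by omega), fjoin, if_pos hi2, hα.charFn_eq hiα]
    · rw [charFn, show 2 * (i / 2) = i by omega]
  · rw [hσi (by omega), fjoin, if_neg hi2, hτ.charFn_eq (by omega)]

end Forcing

/-- If `B` is 1-generic over `A` and `A` is 1-generic, then `A ⊕ B` is 1-generic. -/
theorem oneGeneric_join (A B : Set ℕ)
    (hBA : OneGenericOver A B) (hA : OneGeneric A) :
    OneGeneric (sjoin A B) := by
  intro c
  have hchi : Computable (chi ∅) := (Computable.const 0).of_eq fun n => by simp [chi]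
  obtain ⟨R, hR, hhalts⟩ := exists_primrecRel_halts hchi c (encodeCodeo c)
  obtain ⟨d, hd⟩ := exists_code_dom_iff_searchSucceeds (primrecRel_certifiedPrefix hR)
  obtain ⟨τ, hτ, hhalt | hdiv⟩ := hBA d
  · obtain ⟨σ, hσ, t, ht⟩ := exists_isInitSeg_sjoin_of_searchSucceeds hτ ((hd _ _).1 hhalt)
    exact ⟨σ, hσ, Or.inl ((hhalts σ).2 ⟨t, ht⟩)⟩
  simp only [hd] at hdiv
  obtain ⟨d', hd'⟩ := exists_code_dom_iff_searchSucceeds (primrecRel_certifiedOddCompatible hR τ)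
  obtain ⟨α, hα, hhalt' | hdiv'⟩ := hA d'
  · obtain ⟨σ, t, ht, hσ⟩ := exists_compatibleJoin_of_searchSucceeds hα ((hd' _ _).1 hhalt')
    exact absurd hσ (not_compatibleJoin_of_forall_not_searchSucceeds hdiv ht)
  simp only [hd'] at hdiv'
  obtain ⟨γ, hγ, hγlen⟩ := exists_isInitSeg (sjoin A B) (2 * (α.length + τ.length))
  refine ⟨γ, hγ, Or.inr fun σ hγσ hσ => ?_⟩
  obtain ⟨t, ht⟩ := (hhalts σ).1 hσ
  exact not_certified_of_forall_not_searchSucceeds hα hτ hγ (by omega) (by omega) hdiv' hγσ ht
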